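/- arXiv:1712.07368 — 2 statements merged into one kernel-verified Lean document; each statement's English description precedes it below -/
import Mathlib

section
/- Let $R$ be a Dedekind domain and $\mathfrak{a}$ a non-zero fractional ideal of $R$. Then for every finitely generated $R$-module $M$, one has $\mathrm{Fitt}_R(M) = \mathrm{Fitt}_R(\mathfrak{a} \otimes_R M)$. -/
/-!
Pick `αᵢ ∈ 𝔞` and `βᵢ ∈ 𝔞⁻¹` with `∑ αᵢ βᵢ = 1`. The maps `m ↦ αᵢ ⊗ m : M → 𝔞 ⊗ M`, and
likewise `x ⊗ m ↦ (βᵢ x) • m : 𝔞 ⊗ M → M`, are jointly surjective, and the rank-one idempotent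
matrix `c = (βᵢ αⱼ)` (resp. its transpose) acts trivially through them. So a surjection
`π : Rⁿ → M` with a square matrix `A` of relations yields a surjection from `(Rⁿ)ᵏ` onto the other
module killing the columns of `c ⊗ A + (1 - c) ⊗ 1`. Over the fraction field `c = v uᵀ` with
`uᵀ v = 1`, so `det (1 + PQ) = det (1 + QP)` shows that this matrix has determinant `det A`.
Hence each Fitting ideal contains the other.
-/

/-- The zeroth Fitting ideal of an `R`-module `M`: for each surjection
`π : Rⁿ → M`, take the ideal generated by determinants of all `n × n` matrices whose
columns lie in `ker π` (equivalently, the `n × n` minors of any presentation matrix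
with respect to `π`), and take the supremum over all such surjections. -/
def fittingIdeal (R : Type*) [CommRing R] (M : Type*) [AddCommGroup M] [Module R M] :
    Ideal R :=
  ⨆ (n : ℕ), ⨆ (π : (Fin n → R) →ₗ[R] M), ⨆ (_ : Function.Surjective π),
    Ideal.span {d : R | ∃ A : Matrix (Fin n) (Fin n) R,
      (∀ j, π (fun i => A i j) = 0) ∧ d = A.det}

section Presentation

open Matrix Kronecker

theorem det_mem_fittingIdeal {R M ι : Type*} [CommRing R] [AddCommGroup M] [Module R M]
    [Fintype ι] [DecidableEq ι] {π : (ι → R) →ₗ[R] M} (hπ : Function.Surjective π)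
    {A : Matrix ι ι R} (hA : ∀ j, π (fun i => A i j) = 0) : A.det ∈ fittingIdeal R M := by
  let e := Fintype.equivFin ι
  let π' := π ∘ₗ LinearMap.funLeft R R e
  have hπ' : Function.Surjective π' :=
    hπ.comp (LinearMap.funLeft_surjective_of_injective _ _ _ e.injective)
  refine Submodule.mem_iSup_of_mem _ <| Submodule.mem_iSup_of_mem π' <|
    Submodule.mem_iSup_of_mem hπ' <| Ideal.subset_span
      ⟨A.submatrix e.symm e.symm, fun j => ?_, (det_submatrix_equiv_self _ _).symm⟩
  simpa [π', LinearMap.funLeft, Function.comp_def] using hA (e.symm j)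

theorem Matrix.det_vecMulVec_kronecker_add_one_sub_kronecker_one {K k n : Type*} [CommRing K]
    [Fintype k] [DecidableEq k] [Fintype n] [DecidableEq n]
    {u v : k → K} (huv : u ⬝ᵥ v = 1) (A : Matrix n n K) :
    (vecMulVec v u ⊗ₖ A + (1 - vecMulVec v u) ⊗ₖ 1).det = A.det := by
  have hsplit : vecMulVec v u ⊗ₖ A + (1 - vecMulVec v u) ⊗ₖ 1 =
      1 + (replicateCol Unit v ⊗ₖ (A - 1)) * (replicateRow Unit u ⊗ₖ (1 : Matrix n n K)) := by
    rw [← mul_kronecker_mul, ← vecMulVec_eq, Matrix.mul_one, ← one_kronecker_one]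
    ext ⟨i, s⟩ ⟨j, t⟩
    simp only [add_apply, kroneckerMap_apply, sub_apply]
    ring
  have hinner : replicateRow Unit u * replicateCol Unit v = 1 := by
    ext; simp [huv]
  rw [hsplit, det_one_add_mul_comm, ← mul_kronecker_mul, hinner, Matrix.one_mul,
    ← one_kronecker_one, ← kronecker_add, add_sub_cancel, det_kronecker]
  simp

theorem Matrix.det_kronecker_add_one_sub_kronecker_one {R K k n : Type*} [CommRing R]
    [CommRing K] [Algebra R K] (hinj : Function.Injective (algebraMap R K))
    [Fintype k] [DecidableEq k] [Fintype n] [DecidableEq n] {c : Matrix k k R} {u v : k → K}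
    (hc : c.map (algebraMap R K) = vecMulVec v u) (huv : u ⬝ᵥ v = 1) (A : Matrix n n R) :
    (c ⊗ₖ A + (1 - c) ⊗ₖ 1).det = A.det := by
  apply hinj
  rw [RingHom.map_det, RingHom.map_det, RingHom.mapMatrix_apply, RingHom.mapMatrix_apply,
    ← det_vecMulVec_kronecker_add_one_sub_kronecker_one huv (A.map (algebraMap R K)), ← hc]
  congr 1
  ext ⟨i, s⟩ ⟨j, t⟩
  simp [one_apply, apply_ite (algebraMap R K)]

theorem fittingIdeal_le_of_rankOne_relations {R K M N : Type*} [CommRing R] [CommRing K]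
    [Algebra R K] (hinj : Function.Injective (algebraMap R K))
    [AddCommGroup M] [Module R M] [AddCommGroup N] [Module R N]
    {ι : Type*} [Fintype ι] [DecidableEq ι] (g : ι → M →ₗ[R] N) (c : Matrix ι ι R) {u v : ι → K}
    (hc : c.map (algebraMap R K) = vecMulVec v u) (huv : u ⬝ᵥ v = 1)
    (hsurj : ∀ y : N, ∃ x : ι → M, ∑ i, g i (x i) = y)
    (hrel : ∀ j, ∑ i, c i j • g i = g j) :
    fittingIdeal R M ≤ fittingIdeal R N := by
  refine iSup_le fun n => iSup_le fun π => iSup_le fun hπ => Ideal.span_le.2 ?_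
  rintro _ ⟨A, hA, rfl⟩
  let ρ : (ι × Fin n → R) →ₗ[R] N := ∑ i, g i ∘ₗ π ∘ₗ LinearMap.funLeft R R (Prod.mk i)
  have hρ (x) : ρ x = ∑ i, g i (π fun s => x (i, s)) := LinearMap.sum_apply ..
  have hρsurj : Function.Surjective ρ := by
    intro y
    obtain ⟨x, rfl⟩ := hsurj y
    choose z hz using fun i => hπ (x i)
    exact ⟨fun p => z p.1 p.2, by simp [hρ, hz]⟩
  set B : Matrix (ι × Fin n) (ι × Fin n) R := c ⊗ₖ A + (1 - c) ⊗ₖ 1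
  rw [← det_kronecker_add_one_sub_kronecker_one hinj hc huv A]
  refine det_mem_fittingIdeal hρsurj fun ⟨j, t⟩ => ?_
  have hcol (i) : π (fun s => B (i, s) (j, t)) = (1 - c) i j • π (Pi.single t 1) := by
    have : (fun s => B (i, s) (j, t)) = c i j • (fun s => A s t) + (1 - c) i j • Pi.single t 1 := by
      ext s; simp [B, Pi.single_apply, one_apply]
    rw [this, map_add, map_smul, map_smul, hA, smul_zero, zero_add]
  calc ρ (fun p => B p (j, t))
      = ∑ i, (1 - c) i j • g i (π (Pi.single t 1)) := by simp only [hρ, hcol, map_smul]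
    _ = g j (π (Pi.single t 1)) - (∑ i, c i j • g i) (π (Pi.single t 1)) := by
      simp [Matrix.sub_apply, sub_smul, one_apply]
    _ = 0 := by rw [hrel, sub_self]

end Presentation

namespace Submodule

variable {R K : Type*} [CommRing R] [CommRing K] [Algebra R K]

theorem exists_sum_mul_eq_of_mem_mul {I J : Submodule R K} {x : K} (hx : x ∈ I * J) :
    ∃ (k : ℕ) (α β : Fin k → K), (∀ i, α i ∈ I) ∧ (∀ i, β i ∈ J) ∧ ∑ i, α i * β i = x := by
  rw [mul_eq_span_mul_set, mem_span_set'] at hx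
  obtain ⟨k, f, g, rfl⟩ := hx
  choose α hα β hβ hαβ using fun i => Set.mem_mul.1 (g i).2
  exact ⟨k, fun i => f i • α i, β, fun i => I.smul_mem _ (hα i), hβ, by simp [hαβ]⟩

variable (hinj : Function.Injective (algebraMap R K)) {I J : Submodule R K} (hIJ : I * J ≤ 1)

noncomputable def mulLeftToBase {b : K} (hb : b ∈ J) : I →ₗ[R] R :=
  (LinearEquiv.ofInjective (Algebra.linearMap R K) hinj).symm.toLinearMap ∘ₗ
    (LinearMap.mulLeft R b).restrict (q := LinearMap.range (Algebra.linearMap R K))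
      fun x hx => by
        rw [← one_eq_range, LinearMap.mulLeft_apply, mul_comm]
        exact hIJ (mul_mem_mul hx hb)

theorem algebraMap_mulLeftToBase {b : K} (hb : b ∈ J) (x : I) :
    algebraMap R K (mulLeftToBase hinj hIJ hb x) = b * x :=
  LinearEquiv.ofInjective_symm_apply (f := Algebra.linearMap R K) (h := hinj) _

end Submodule

section Tensor

open Matrix TensorProduct

theorem sum_mul_mul_eq_of_sum_mul_eq_one {K ι : Type*} [CommRing K] [Fintype ι] {α β : ι → K}
    (hαβ : ∑ i, α i * β i = 1) (y : K) : ∑ i, β i * y * α i = y := by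
  simp_rw [mul_right_comm _ y, mul_comm (β _) (α _), ← Finset.sum_mul, hαβ, one_mul]

theorem fittingIdeal_le_fittingIdeal_tensor {R K : Type*} [CommRing R] [CommRing K] [Algebra R K]
    (hinj : Function.Injective (algebraMap R K)) {I J : Submodule R K} (hIJ : I * J ≤ 1)
    {ι : Type*} [Fintype ι] {α β : ι → K} (hα : ∀ i, α i ∈ I) (hβ : ∀ i, β i ∈ J)
    (hαβ : ∑ i, α i * β i = 1) (M : Type*) [AddCommGroup M] [Module R M] :
    fittingIdeal R M ≤ fittingIdeal R (I ⊗[R] M) := by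
  classical
  let d i := Submodule.mulLeftToBase hinj hIJ (hβ i)
  have hd (i) (x : I) : algebraMap R K (d i x) = β i * x :=
    Submodule.algebraMap_mulLeftToBase hinj hIJ (hβ i) x
  refine fittingIdeal_le_of_rankOne_relations hinj (fun i => TensorProduct.mk R I M ⟨α i, hα i⟩)
    (.of fun i j => d i ⟨α j, hα j⟩) (u := α) (v := β) ?_ ?_ ?_ ?_
  · ext i j
    simp [hd, vecMulVec_apply]
  · simpa [dotProduct] using hαβ
  · intro y
    induction y using TensorProduct.induction_on with
    | zero => exact ⟨0, by simp⟩
    | tmul x m =>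
      refine ⟨fun i => d i x • m, ?_⟩
      have hx : ∑ i, d i x • (⟨α i, hα i⟩ : I) = x := by
        ext
        simp [Algebra.smul_def, hd, sum_mul_mul_eq_of_sum_mul_eq_one hαβ]
      simp_rw [mk_apply, tmul_smul, smul_tmul']
      rw [← sum_tmul, hx]
    | add y z hy hz =>
      obtain ⟨x, rfl⟩ := hy
      obtain ⟨x', rfl⟩ := hz
      exact ⟨x + x', by simp [tmul_add, Finset.sum_add_distrib]⟩
  · intro j
    ext m
    have hα' : ∑ i, d i ⟨α j, hα j⟩ • (⟨α i, hα i⟩ : I) = ⟨α j, hα j⟩ := by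
      ext
      simp [Algebra.smul_def, hd, sum_mul_mul_eq_of_sum_mul_eq_one hαβ]
    simp_rw [LinearMap.sum_apply, LinearMap.smul_apply, mk_apply, of_apply, smul_tmul']
    rw [← sum_tmul, hα']

theorem fittingIdeal_tensor_le_fittingIdeal {R K : Type*} [CommRing R] [CommRing K] [Algebra R K]
    (hinj : Function.Injective (algebraMap R K)) {I J : Submodule R K} (hIJ : I * J ≤ 1)
    {ι : Type*} [Fintype ι] {α β : ι → K} (hα : ∀ i, α i ∈ I) (hβ : ∀ i, β i ∈ J)
    (hαβ : ∑ i, α i * β i = 1) (M : Type*) [AddCommGroup M] [Module R M] :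
    fittingIdeal R (I ⊗[R] M) ≤ fittingIdeal R M := by
  classical
  let d i := Submodule.mulLeftToBase hinj hIJ (hβ i)
  have hd (i) (x : I) : algebraMap R K (d i x) = β i * x :=
    Submodule.algebraMap_mulLeftToBase hinj hIJ (hβ i) x
  refine fittingIdeal_le_of_rankOne_relations hinj (fun i => lift (LinearMap.lsmul R M ∘ₗ d i))
    (.of fun i j => d j ⟨α i, hα i⟩) (u := β) (v := α) ?_ ?_ ?_ ?_
  · ext i j
    simp [hd, vecMulVec_apply, mul_comm]
  · simpa [dotProduct, mul_comm] using hαβ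
  · intro m
    refine ⟨fun i => ⟨α i, hα i⟩ ⊗ₜ m, ?_⟩
    have h1 : ∑ i, d i ⟨α i, hα i⟩ = 1 := hinj <| by simpa [hd, mul_comm] using hαβ
    simp [← Finset.sum_smul, h1]
  · intro j
    apply TensorProduct.ext'
    intro x m
    have hx : ∑ i, d j ⟨α i, hα i⟩ * d i x = d j x := hinj <| by
      simp only [map_sum, map_mul, hd]
      rw [← sum_mul_mul_eq_of_sum_mul_eq_one hαβ (β j * x)]
      exact Finset.sum_congr rfl fun i _ => by ring
    simp [smul_smul, ← Finset.sum_smul, hx]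

theorem fittingIdeal_tensor_eq_of_mul_eq_one {R K : Type*} [CommRing R] [CommRing K]
    [Algebra R K] (hinj : Function.Injective (algebraMap R K)) {I J : Submodule R K}
    (hIJ : I * J = 1) (M : Type*) [AddCommGroup M] [Module R M] :
    fittingIdeal R M = fittingIdeal R (I ⊗[R] M) := by
  obtain ⟨k, α, β, hα, hβ, hαβ⟩ :=
    Submodule.exists_sum_mul_eq_of_mem_mul (hIJ ▸ Submodule.one_le.mp le_rfl : (1 : K) ∈ I * J)
  exact le_antisymm (fittingIdeal_le_fittingIdeal_tensor hinj hIJ.le hα hβ hαβ M)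
    (fittingIdeal_tensor_le_fittingIdeal hinj hIJ.le hα hβ hαβ M)

end Tensor

open TensorProduct in
theorem fittingIdeal_tensor_fractionalIdeal_general (R : Type*) [CommRing R] [IsDedekindDomain R]
    (a : FractionalIdeal (nonZeroDivisors R) (FractionRing R)) (ha : a ≠ 0)
    (M : Type*) [AddCommGroup M] [Module R M] :
    fittingIdeal R M =
      fittingIdeal R ((a : Submodule R (FractionRing R)) ⊗[R] M) :=
  fittingIdeal_tensor_eq_of_mul_eq_one (IsFractionRing.injective R (FractionRing R)) (J := ↑a⁻¹)
    (by rw [← FractionalIdeal.coe_mul, mul_inv_cancel₀ ha, FractionalIdeal.coe_one]) M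

open TensorProduct in
/-- Over a Dedekind domain `R`, tensoring with a non-zero fractional ideal `𝔞` does not
change zeroth Fitting ideals of finitely generated modules. -/
theorem fittingIdeal_tensor_fractionalIdeal (R : Type*) [CommRing R] [IsDedekindDomain R]
    (a : FractionalIdeal (nonZeroDivisors R) (FractionRing R)) (ha : a ≠ 0)
    (M : Type*) [AddCommGroup M] [Module R M] [Module.Finite R M] :
    fittingIdeal R M =
      fittingIdeal R ((a : Submodule R (FractionRing R)) ⊗[R] M) :=
  fittingIdeal_tensor_fractionalIdeal_general R a ha M
end

section
/- Let $p$ be a prime and let $\Lambda = \{ \begin{pmatrix} a & b \\ c & d \end{pmatrix} \in M_{2\times 2}(\mathbb{Z}_p) : b \equiv 0 \bmod p \}$. Let $M$ (respectively $N$) be $\mathbb{Z}_p/p\mathbb{Z}_p$ with $\Lambda$ acting via $\lambda \cdot m = \bar{a} m$ (respectively $\lambda \cdot n = \bar{d} n$) for $\lambda = \begin{pmatrix} a & b \\ c & d \end{pmatrix}$. Then right multiplication by $\begin{pmatrix} 0 & p \\ 1 & 0 \end{pmatrix}$ gives a short exact sequence of left $\Lambda$-modules $0 \to \Lambda \to \Lambda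 \to M \oplus N \to 0$. -/
/-! `(0 p; 1 0)` has determinant `-p`, a non-zero-divisor of `ℤ_p`, so right multiplication by
it is injective. Its image `Λ·(0 p; 1 0)` consists of the matrices of `Λ` whose two diagonal
entries are divisible by `p`, which is the kernel of reducing the diagonal entries mod `p`. -/

variable (p : ℕ) [Fact p.Prime]

/-- The hereditary order `Λ ⊆ M₂(ℤ_p)` of matrices whose upper-right entry is
divisible by `p`. -/
def Lam : Subring (Matrix (Fin 2) (Fin 2) ℤ_[p]) where
  carrier := {A | (p : ℤ_[p]) ∣ A 0 1}
  zero_mem' := by simp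
  one_mem' := by simp [Matrix.one_apply]
  add_mem' := by
    intro A B hA hB
    simpa using dvd_add hA hB
  neg_mem' := by
    intro A hA
    simpa using hA.neg_right
  mul_mem' := by
    intro A B hA hB
    have : (A * B) 0 1 = A 0 0 * B 0 1 + A 0 1 * B 1 1 := by
      simp [Matrix.mul_apply, Fin.sum_univ_two]
    simpa [Set.mem_setOf_eq, this] using dvd_add (hB.mul_left _) (hA.mul_right _)

/-- The ring homomorphism `Λ → ℤ/p` reading off the upper-left entry modulo `p`. -/
noncomputable def phiM : Lam p →+* ZMod p where
  toFun A := PadicInt.toZMod (A.1 0 0)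
  map_one' := by simp [Matrix.one_apply]
  map_zero' := by simp
  map_add' A B := by simp [Subring.coe_add]
  map_mul' A B := by
    have h : ((A : Matrix (Fin 2) (Fin 2) ℤ_[p]) * B) 0 0
        = A.1 0 0 * B.1 0 0 + A.1 0 1 * B.1 1 0 := by
      simp [Matrix.mul_apply, Fin.sum_univ_two]
    obtain ⟨c, hc⟩ := A.2
    show PadicInt.toZMod (((A : Matrix (Fin 2) (Fin 2) ℤ_[p]) * B) 0 0) = _
    rw [h, hc]
    simp [ZMod.natCast_self]

/-- The ring homomorphism `Λ → ℤ/p` reading off the lower-right entry modulo `p`. -/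
noncomputable def phiN : Lam p →+* ZMod p where
  toFun A := PadicInt.toZMod (A.1 1 1)
  map_one' := by simp [Matrix.one_apply]
  map_zero' := by simp
  map_add' A B := by simp [Subring.coe_add]
  map_mul' A B := by
    have h : ((A : Matrix (Fin 2) (Fin 2) ℤ_[p]) * B) 1 1
        = A.1 1 0 * B.1 0 1 + A.1 1 1 * B.1 1 1 := by
      simp [Matrix.mul_apply, Fin.sum_univ_two]
    obtain ⟨c, hc⟩ := B.2
    show PadicInt.toZMod (((A : Matrix (Fin 2) (Fin 2) ℤ_[p]) * B) 1 1) = _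
    rw [h, hc]
    simp [ZMod.natCast_self]

/-- `M = ℤ_p/pℤ_p` with `Λ` acting through the upper-left entry. -/
def Mmod := ZMod p

/-- `N = ℤ_p/pℤ_p` with `Λ` acting through the lower-right entry. -/
def Nmod := ZMod p

instance : AddCommGroup (Mmod p) := inferInstanceAs (AddCommGroup (ZMod p))
instance : AddCommGroup (Nmod p) := inferInstanceAs (AddCommGroup (ZMod p))
noncomputable instance : Module (Lam p) (Mmod p) := Module.compHom (ZMod p) (phiM p)
noncomputable instance : Module (Lam p) (Nmod p) := Module.compHom (ZMod p) (phiN p)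

/-- The matrix `(0 p; 1 0)` as an element of `Λ`. -/
noncomputable def eMat : Lam p :=
  ⟨!![0, (p : ℤ_[p]); 1, 0], by
    show (p : ℤ_[p]) ∣ !![0, (p : ℤ_[p]); 1, 0] 0 1
    simp⟩

/-- Right multiplication by `(0 p; 1 0)` on `Λ`, as a left `Λ`-linear map. -/
noncomputable def rmul : Lam p →ₗ[Lam p] Lam p where
  toFun x := x * eMat p
  map_add' x y := add_mul x y (eMat p)
  map_smul' r x := by
    simp [smul_eq_mul, mul_assoc]

/-- The quotient map `Λ → M ⊕ N` given by reducing the two diagonal entries mod `p`. -/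
noncomputable def quotMap : Lam p →ₗ[Lam p] (Mmod p × Nmod p) where
  toFun x := (PadicInt.toZMod (x.1 0 0), PadicInt.toZMod (x.1 1 1))
  map_add' x y := by simp; rfl
  map_smul' r x := by
    have h0 : ((r : Matrix (Fin 2) (Fin 2) ℤ_[p]) * x) 0 0
        = r.1 0 0 * x.1 0 0 + r.1 0 1 * x.1 1 0 := by
      simp [Matrix.mul_apply, Fin.sum_univ_two]
    have h1 : ((r : Matrix (Fin 2) (Fin 2) ℤ_[p]) * x) 1 1
        = r.1 1 0 * x.1 0 1 + r.1 1 1 * x.1 1 1 := by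
      simp [Matrix.mul_apply, Fin.sum_univ_two]
    obtain ⟨c, hc⟩ := r.2
    obtain ⟨c', hc'⟩ := x.2
    show (PadicInt.toZMod (((r : Matrix (Fin 2) (Fin 2) ℤ_[p]) * x) 0 0),
        PadicInt.toZMod (((r : Matrix (Fin 2) (Fin 2) ℤ_[p]) * x) 1 1))
      = (phiM p r * PadicInt.toZMod (x.1 0 0), phiN p r * PadicInt.toZMod (x.1 1 1))
    rw [h0, h1, hc, hc']
    simp [phiM, phiN, ZMod.natCast_self]

variable {p} in
theorem PadicInt.toZMod_eq_zero_iff_dvd (x : ℤ_[p]) : toZMod x = 0 ↔ (p : ℤ_[p]) ∣ x := by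
  rw [← RingHom.mem_ker, ker_toZMod, maximalIdeal_eq_span_p, Ideal.mem_span_singleton]

theorem mem_Lam_iff {A : Matrix (Fin 2) (Fin 2) ℤ_[p]} : A ∈ Lam p ↔ (p : ℤ_[p]) ∣ A 0 1 :=
  Iff.rfl

theorem coe_rmul (x : Lam p) :
    ((rmul p x : Lam p) : Matrix (Fin 2) (Fin 2) ℤ_[p]) =
      !![x.1 0 1, p * x.1 0 0; x.1 1 1, p * x.1 1 0] := by
  change x.1 * !![0, (p : ℤ_[p]); 1, 0] = _
  rw [Matrix.eta_fin_two x.1, Matrix.mul_fin_two]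
  simp [mul_comm]

theorem isRightRegular_eMat :
    IsRightRegular ((eMat p : Lam p) : Matrix (Fin 2) (Fin 2) ℤ_[p]) := by
  rw [Matrix.isRightRegular_iff_nonsingular, Matrix.nonsingular_iff_det_ne_zero]
  simp [eMat, Matrix.det_fin_two_of, (Fact.out : p.Prime).ne_zero]

theorem rmul_injective : Function.Injective (rmul p) := fun _ _ hxy =>
  Subtype.ext <| isRightRegular_eMat p <| congrArg Subtype.val hxy

theorem quotMap_eq_zero_iff (y : Lam p) :
    quotMap p y = 0 ↔ (p : ℤ_[p]) ∣ y.1 0 0 ∧ (p : ℤ_[p]) ∣ y.1 1 1 := by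
  simp only [← PadicInt.toZMod_eq_zero_iff_dvd]
  exact Prod.ext_iff

theorem exists_rmul_eq_iff (y : Lam p) :
    (∃ x, rmul p x = y) ↔ (p : ℤ_[p]) ∣ y.1 0 0 ∧ (p : ℤ_[p]) ∣ y.1 1 1 := by
  constructor
  · rintro ⟨x, rfl⟩
    rw [coe_rmul]
    exact ⟨x.2, by simp⟩
  · rintro ⟨⟨a, ha⟩, ⟨d, hd⟩⟩
    obtain ⟨b, hb⟩ := y.2
    refine ⟨⟨!![b, y.1 0 0; d, y.1 1 0], (mem_Lam_iff p).2 ⟨a, by simpa using ha⟩⟩,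
      Subtype.ext ?_⟩
    rw [coe_rmul]
    ext i j
    fin_cases i <;> fin_cases j <;> simp [← hb, ← hd]

theorem quotMap_surjective : Function.Surjective (quotMap p) := by
  rintro ⟨m, n⟩
  obtain ⟨a, rfl⟩ := ZMod.ringHom_surjective (PadicInt.toZMod (p := p)) m
  obtain ⟨d, rfl⟩ := ZMod.ringHom_surjective (PadicInt.toZMod (p := p)) n
  exact ⟨⟨!![a, 0; 0, d], (mem_Lam_iff p).2 (dvd_zero _)⟩, rfl⟩

/-- Example of a non-Fitting-additive hereditary order: with `Λ`, `M`, `N` as above,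
right multiplication by `(0 p; 1 0)` yields a short exact sequence of left `Λ`-modules
`0 → Λ → Λ → M ⊕ N → 0`. -/
theorem ses_Lam :
    Function.Injective (rmul p) ∧ Function.Exact (rmul p) (quotMap p) ∧
      Function.Surjective (quotMap p) :=
  ⟨rmul_injective p,
    fun y => (quotMap_eq_zero_iff p y).trans (exists_rmul_eq_iff p y).symm,
    quotMap_surjective p⟩
end
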